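/- arXiv:math/0601073 — 9 statements merged into one kernel-verified Lean document; each statement's English description precedes it below -/
import Mathlib

section
/- Let V be a finite-dimensional real inner product space with basis Δ = {α₁,…,αₙ} satisfying ⟨αᵢ, αⱼ⟩ ≤ 0 for all i ≠ j, and let {β₁,…,βₙ} be the dual basis (i.e. ⟨βᵢ, αⱼ⟩ = δᵢⱼ). Then each βᵢ lies in the nonnegative cone spanned by Δ: writing βᵢ = Σⱼ eⱼᵢ αⱼ, one has eⱼᵢ ≥ 0 for all i, j. -/
/-!
Each `βᵢ` pairs nonnegatively with every `αⱼ`, and any `x` with `⟪x, b j⟫ ≥ 0` for all `j` has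
nonnegative coordinates.
Split the coordinates of `x` into positive and negative parts, `x = v - w` with `v`, `w`
nonnegative combinations of the basis with disjoint supports. Obtuseness of the basis gives
`⟪v, w⟫ ≤ 0`, while `⟪x, b j⟫ ≥ 0` gives `⟪x, w⟫ ≥ 0`; hence `‖w‖² = ⟪v, w⟫ - ⟪x, w⟫ ≤ 0`,
so `w = 0` and the negative parts vanish.
-/

open RealInnerProductSpace

lemma posPart_mul_negPart_eq_zero {α : Type*} [Ring α] [LinearOrder α] [IsOrderedRing α] (a : α) :
    a⁺ * a⁻ = 0 := by
  rcases le_total a 0 with h | h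
  · rw [posPart_eq_zero.mpr h, zero_mul]
  · rw [negPart_eq_zero.mpr h, mul_zero]

section ObtuseFamily

variable {V ι : Type*} [NormedAddCommGroup V] [InnerProductSpace ℝ V] [Fintype ι]
  {b : ι → V}

lemma inner_sum_smul_nonpos_of_pairwise_inner_nonpos
    (hb : Pairwise fun i j => ⟪b i, b j⟫ ≤ 0) {f g : ι → ℝ} (hf : ∀ j, 0 ≤ f j)
    (hg : ∀ j, 0 ≤ g j) (hfg : ∀ j, f j * g j = 0) : ⟪∑ j, f j • b j, ∑ k, g k • b k⟫ ≤ 0 := by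
  simp only [sum_inner, inner_sum, real_inner_smul_left, real_inner_smul_right]
  refine Finset.sum_nonpos fun j _ => Finset.sum_nonpos fun k _ => ?_
  rcases eq_or_ne j k with rfl | hjk
  · rw [← mul_assoc, mul_comm (g j), hfg, zero_mul]
  · exact mul_nonpos_of_nonneg_of_nonpos (hg j)
      (mul_nonpos_of_nonneg_of_nonpos (hf k) (hb hjk.symm))

lemma Module.Basis.repr_nonneg_of_inner_nonneg (b : Module.Basis ι ℝ V)
    (hb : Pairwise fun i j => ⟪b i, b j⟫ ≤ 0) {x : V} (hx : ∀ j, 0 ≤ ⟪x, b j⟫) (j : ι) :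
    0 ≤ b.repr x j := by
  set c : ι → ℝ := fun k => b.repr x k
  set v : V := ∑ k, (c k)⁺ • b k
  set w : V := ∑ k, (c k)⁻ • b k
  have hxvw : x = v - w := by
    rw [← Finset.sum_sub_distrib]
    conv_lhs => rw [← b.sum_repr x]
    simp only [← sub_smul, posPart_sub_negPart, c]
  have hvw : ⟪v, w⟫ ≤ 0 :=
    inner_sum_smul_nonpos_of_pairwise_inner_nonpos hb (fun k => posPart_nonneg _)
      (fun k => negPart_nonneg _) fun k => posPart_mul_negPart_eq_zero _
  have hxw : 0 ≤ ⟪x, w⟫ := by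
    rw [inner_sum]
    exact Finset.sum_nonneg fun k _ => by
      rw [real_inner_smul_right]; exact mul_nonneg (negPart_nonneg _) (hx k)
  have hw : w = 0 := by
    have hww : ⟪w, w⟫ = ⟪v, w⟫ - ⟪x, w⟫ := by rw [hxvw, inner_sub_left, sub_sub_cancel]
    exact inner_self_eq_zero.mp (le_antisymm (by linarith) real_inner_self_nonneg)
  exact negPart_eq_zero.mp (Fintype.linearIndependent_iff.mp b.linearIndependent _ hw j)

end ObtuseFamily

theorem langlands_dual_basis_nonneg_coeffs_general
    {V : Type*} [NormedAddCommGroup V] [InnerProductSpace ℝ V]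
    {n : ℕ} (b : Module.Basis (Fin n) ℝ V)
    (hneg : ∀ i j, i ≠ j → ⟪b i, b j⟫ ≤ 0)
    (β : Fin n → V)
    (hdual : ∀ i j, ⟪β i, b j⟫ = if i = j then (1 : ℝ) else 0) :
    ∀ i j, 0 ≤ b.repr (β i) j := by
  intro i
  refine b.repr_nonneg_of_inner_nonneg (fun j k => hneg j k) fun j => ?_
  rw [hdual]
  split_ifs <;> norm_num

/-- Langlands' geometric lemma: if a basis `α₁,…,αₙ` of a finite-dimensional real inner
product space has pairwise nonpositive inner products, then each vector `βᵢ` of the dual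
basis (characterized by `⟪βᵢ, αⱼ⟫ = δᵢⱼ`) is a nonnegative linear combination of the `αⱼ`;
i.e. the coefficients `eⱼᵢ` in `βᵢ = Σⱼ eⱼᵢ αⱼ` are all nonnegative. -/
theorem langlands_dual_basis_nonneg_coeffs
    {V : Type*} [NormedAddCommGroup V] [InnerProductSpace ℝ V] [FiniteDimensional ℝ V]
    {n : ℕ} (b : Module.Basis (Fin n) ℝ V)
    (hneg : ∀ i j, i ≠ j → ⟪b i, b j⟫ ≤ 0)
    (β : Fin n → V)
    (hdual : ∀ i j, ⟪β i, b j⟫ = if i = j then (1 : ℝ) else 0) :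
    ∀ i j, 0 ≤ b.repr (β i) j :=
  langlands_dual_basis_nonneg_coeffs_general b hneg β hdual
end

section
/- Let v₀, …, v_k be vectors in a finite-dimensional real inner product space V such that ⟨vᵢ, vⱼ⟩ < 0 for all 0 ≤ i < j ≤ k. Then the dimension of the span of {v₀, …, v_k} is either k or k+1; in particular, every subset of {v₀,…,v_k} of cardinality k is linearly independent. -/
open RealInnerProductSpace

lemma li_of_neg_inner {V : Type*} [NormedAddCommGroup V] [InnerProductSpace ℝ V]
    {ι : Type*} [Fintype ι] (u : V) (w : ι → V)
    (hu : ∀ i, ⟪u, w i⟫ < 0) (hw : ∀ i j, i ≠ j → ⟪w i, w j⟫ < 0) :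
    LinearIndependent ℝ w := by
  rw [Fintype.linearIndependent_iff]
  intro g hg
  classical
  set P : Finset ι := Finset.univ.filter (fun i => 0 < g i) with hP
  set N : Finset ι := Finset.univ.filter (fun i => g i < 0) with hN
  have hPN : Disjoint P N := by
    simp only [Finset.disjoint_filter, hP, hN]
    intro i _ h1 h2
    linarith
  set a : V := ∑ i ∈ P, g i • w i with ha
  set b : V := ∑ i ∈ N, (-g i) • w i with hb
  have hsum : a - b = 0 := by
    have h1 : ∑ i ∈ P ∪ N, g i • w i = ∑ i ∈ Finset.univ, g i • w i := by
      apply Finset.sum_subset (Finset.subset_univ _)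
      intro i _ hi
      simp only [hP, hN, Finset.mem_union, Finset.mem_filter, Finset.mem_univ, true_and,
        not_or, not_lt] at hi
      have : g i = 0 := le_antisymm hi.1 hi.2
      simp [this]
    rw [Finset.sum_union hPN] at h1
    have : a + ∑ i ∈ N, g i • w i = 0 := by rw [ha, h1, hg]
    rw [ha, hb]
    simp only [neg_smul, Finset.sum_neg_distrib, sub_neg_eq_add]
    rw [← ha]; exact this
  have hab : a = b := by rwa [sub_eq_zero] at hsum
  have hinner : ⟪a, b⟫ ≤ 0 := by
    rw [ha, hb, sum_inner]
    apply Finset.sum_nonpos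
    intro i hi
    rw [inner_sum]
    apply Finset.sum_nonpos
    intro j hj
    rw [real_inner_smul_left, real_inner_smul_right]
    have hgi : 0 < g i := (Finset.mem_filter.mp hi).2
    have hgj : g j < 0 := (Finset.mem_filter.mp hj).2
    have hij : i ≠ j := by
      intro h; subst h; linarith
    have := hw i j hij
    have h1 : 0 < -g j := by linarith
    exact le_of_lt (mul_neg_of_pos_of_neg hgi (mul_neg_of_pos_of_neg h1 this))
  have ha0 : a = 0 := by
    rw [hab] at hinner
    have h0 : ⟪b, b⟫ = 0 := le_antisymm hinner real_inner_self_nonneg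
    rw [hab, ← @inner_self_eq_zero ℝ]; exact h0
  have hb0 : b = 0 := hab ▸ ha0
  have hPe : ∀ i ∈ P, g i = 0 := by
    intro i hi
    have h1 : ⟪u, a⟫ = 0 := by rw [ha0, inner_zero_right]
    rw [ha, inner_sum] at h1
    have h2 : ∀ j ∈ P, g j * ⟪u, w j⟫ ≤ 0 := by
      intro j hj
      have hgj : 0 < g j := (Finset.mem_filter.mp hj).2
      have := hu j
      nlinarith
    simp only [real_inner_smul_right] at h1
    have := (Finset.sum_eq_zero_iff_of_nonpos h2).mp h1 i hi
    have hgi : 0 < g i := (Finset.mem_filter.mp hi).2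
    have hui := hu i
    nlinarith
  have hNe : ∀ i ∈ N, g i = 0 := by
    intro i hi
    have h1 : ⟪u, b⟫ = 0 := by rw [hb0, inner_zero_right]
    rw [hb, inner_sum] at h1
    have h2 : ∀ j ∈ N, (-g j) * ⟪u, w j⟫ ≤ 0 := by
      intro j hj
      have hgj : g j < 0 := (Finset.mem_filter.mp hj).2
      have := hu j
      nlinarith
    simp only [real_inner_smul_right] at h1
    have := (Finset.sum_eq_zero_iff_of_nonpos h2).mp h1 i hi
    have hgi : g i < 0 := (Finset.mem_filter.mp hi).2
    have hui := hu i
    nlinarith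
  intro i
  by_contra hgi
  rcases lt_trichotomy (g i) 0 with h | h | h
  · exact hgi (hNe i (Finset.mem_filter.mpr ⟨Finset.mem_univ _, h⟩))
  · exact hgi h
  · exact hgi (hPe i (Finset.mem_filter.mpr ⟨Finset.mem_univ _, h⟩))

/-- If `v₀,…,v_k` have strictly negative pairwise inner products, then their span has
dimension `k` or `k+1`; in particular every subset of cardinality `k` is linearly
independent. -/
theorem span_dim_of_pairwise_neg_inner
    {V : Type*} [NormedAddCommGroup V] [InnerProductSpace ℝ V] [FiniteDimensional ℝ V]
    {k : ℕ} (v : Fin (k + 1) → V)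
    (hneg : ∀ i j, i < j → ⟪v i, v j⟫ < 0) :
    (Module.finrank ℝ (Submodule.span ℝ (Set.range v)) = k ∨
      Module.finrank ℝ (Submodule.span ℝ (Set.range v)) = k + 1) ∧
    ∀ s : Finset (Fin (k + 1)), s.card = k →
      LinearIndependent ℝ (fun i : s => v i) := by
  classical
  have hsym : ∀ i j : Fin (k + 1), i ≠ j → ⟪v i, v j⟫ < 0 := by
    intro i j hij
    rcases lt_or_gt_of_ne hij with h | h
    · exact hneg i j h
    · rw [real_inner_comm]; exact hneg j i h
  have key : ∀ s : Finset (Fin (k + 1)), s.card = k →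
      LinearIndependent ℝ (fun i : s => v i) := by
    intro s hs
    have hcompl : sᶜ.Nonempty := by
      rw [← Finset.card_pos, Finset.card_compl, hs]
      simp
    obtain ⟨i₀, hi₀⟩ := hcompl
    rw [Finset.mem_compl] at hi₀
    apply li_of_neg_inner (v i₀)
    · intro i
      exact hsym i₀ i (fun h => hi₀ (h ▸ i.2))
    · intro i j hij
      exact hsym i j (fun h => hij (Subtype.ext h))
  refine ⟨?_, key⟩
  have hle : Module.finrank ℝ (Submodule.span ℝ (Set.range v)) ≤ k + 1 := by
    have := finrank_range_le_card (R := ℝ) v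
    simpa [Set.finrank] using this
  have hge : k ≤ Module.finrank ℝ (Submodule.span ℝ (Set.range v)) := by
    set s : Finset (Fin (k + 1)) := Finset.univ.erase 0 with hsdef
    have hcard : s.card = k := by simp [hsdef]
    have hli := key s hcard
    have h1 : Module.finrank ℝ (Submodule.span ℝ (Set.range (fun i : s => v i))) = k := by
      rw [finrank_span_eq_card hli]
      simp [Fintype.card_coe, hcard]
    have h2 : Submodule.span ℝ (Set.range (fun i : s => v i)) ≤
        Submodule.span ℝ (Set.range v) := by
      apply Submodule.span_mono
      rintro _ ⟨i, rfl⟩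
      exact ⟨i, rfl⟩
    calc k = _ := h1.symm
      _ ≤ _ := Submodule.finrank_mono h2
  omega
end

section
/- Let v₀, …, v_k be vectors in a finite-dimensional real inner product space V such that ⟨vᵢ, vⱼ⟩ < 0 for all 0 ≤ i < j ≤ k. Then the span of the set of differences {vᵢ − vⱼ : 0 ≤ i, j ≤ k} is a subspace of dimension exactly k. -/
open RealInnerProductSpace Finset

private lemma aux_coeffs_zero {V : Type*} [NormedAddCommGroup V] [InnerProductSpace ℝ V]
    {n : ℕ} (v : Fin n → V) (hneg : ∀ i j, i ≠ j → ⟪v i, v j⟫ < 0)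
    (d : Fin n → ℝ) (hsum : ∑ i, d i = 0) (hv : ∑ i, d i • v i = 0) :
    ∀ i, d i = 0 := by
  by_contra h
  push_neg at h
  obtain ⟨i₀, hi₀⟩ := h
  set P := univ.filter (fun i => 0 < d i) with hP
  set N := univ.filter (fun i => d i < 0) with hN
  have hPne : P.Nonempty := by
    by_contra hPe
    rw [Finset.not_nonempty_iff_eq_empty, Finset.filter_eq_empty_iff] at hPe
    have : ∑ i, d i < ∑ _i : Fin n, (0 : ℝ) := by
      refine Finset.sum_lt_sum (fun i _ => ?_) ⟨i₀, Finset.mem_univ _, ?_⟩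
      · exact le_of_not_gt (hPe (Finset.mem_univ i))
      · exact lt_of_le_of_ne (le_of_not_gt (hPe (Finset.mem_univ i₀))) hi₀
    simp [hsum] at this
  have hNne : N.Nonempty := by
    by_contra hNe
    rw [Finset.not_nonempty_iff_eq_empty, Finset.filter_eq_empty_iff] at hNe
    have : ∑ _i : Fin n, (0 : ℝ) < ∑ i, d i := by
      refine Finset.sum_lt_sum (fun i _ => ?_) ⟨i₀, Finset.mem_univ _, ?_⟩
      · exact le_of_not_gt (hNe (Finset.mem_univ i))
      · exact lt_of_le_of_ne (le_of_not_gt (hNe (Finset.mem_univ i₀))) (Ne.symm hi₀)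
    simp [hsum] at this
  -- split the sum
  have hsplit : ∑ i ∈ P, d i • v i + ∑ i ∈ N, d i • v i = 0 := by
    have h1 : ∑ i ∈ P, d i • v i + ∑ i ∈ univ.filter (fun i => ¬ 0 < d i), d i • v i = 0 := by
      rw [Finset.sum_filter_add_sum_filter_not]
      exact hv
    have h2 : ∑ i ∈ N, d i • v i = ∑ i ∈ univ.filter (fun i => ¬ 0 < d i), d i • v i := by
      refine Finset.sum_subset ?_ ?_
      · intro i hi
        simp only [hN, Finset.mem_filter, Finset.mem_univ, true_and] at hi ⊢
        exact not_lt_of_gt hi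
      · intro i hi hiN
        simp only [Finset.mem_filter, Finset.mem_univ, true_and] at hi
        simp only [hN, Finset.mem_filter, Finset.mem_univ, true_and] at hiN
        have : d i = 0 := le_antisymm (le_of_not_gt hi) (le_of_not_gt hiN)
        simp [this]
    rw [h2]
    exact h1
  have hu : ∑ i ∈ P, d i • v i = ∑ j ∈ N, (-d j) • v j := by
    rw [eq_neg_of_add_eq_zero_left hsplit]
    rw [← Finset.sum_neg_distrib]
    simp [neg_smul]
  have hnn : (0 : ℝ) ≤ ⟪∑ i ∈ P, d i • v i, ∑ j ∈ N, (-d j) • v j⟫ := by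
    rw [← hu]; exact real_inner_self_nonneg
  have hcomp : ⟪∑ i ∈ P, d i • v i, ∑ j ∈ N, (-d j) • v j⟫
      = ∑ i ∈ P, ∑ j ∈ N, d i * ((-d j) * ⟪v i, v j⟫) := by
    simp only [sum_inner, inner_sum, real_inner_smul_left, real_inner_smul_right]
    rw [Finset.sum_comm]
    exact Finset.sum_congr rfl fun _ _ => Finset.sum_congr rfl fun _ _ => by ring
  rw [hcomp] at hnn
  have hlt : ∑ i ∈ P, ∑ j ∈ N, d i * ((-d j) * ⟪v i, v j⟫) < 0 := by
    refine Finset.sum_neg (fun i hi => ?_) hPne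
    simp only [hP, Finset.mem_filter, Finset.mem_univ, true_and] at hi
    refine Finset.sum_neg (fun j hj => ?_) hNne
    simp only [hN, Finset.mem_filter, Finset.mem_univ, true_and] at hj
    have hij : i ≠ j := by
      rintro rfl
      exact absurd hj (not_lt_of_gt hi)
    have := hneg i j hij
    have h1 : (0:ℝ) < -d j := by linarith
    exact mul_neg_of_pos_of_neg hi (mul_neg_of_pos_of_neg h1 this)
  linarith

/-- If `v₀,…,v_k` have strictly negative pairwise inner products, then the span of the
differences `vᵢ − vⱼ` has dimension exactly `k`. -/
theorem span_differences_rank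
    {V : Type*} [NormedAddCommGroup V] [InnerProductSpace ℝ V] [FiniteDimensional ℝ V]
    {k : ℕ} (v : Fin (k + 1) → V)
    (hneg : ∀ i j, i < j → ⟪v i, v j⟫ < 0) :
    Module.finrank ℝ
      (Submodule.span ℝ (Set.range fun p : Fin (k + 1) × Fin (k + 1) => v p.1 - v p.2)) = k := by
  have hneg' : ∀ i j : Fin (k + 1), i ≠ j → ⟪v i, v j⟫ < 0 := by
    intro i j hij
    rcases lt_or_gt_of_ne hij with h | h
    · exact hneg i j h
    · rw [real_inner_comm]; exact hneg j i h
  set b : Fin k → V := fun i => v i.succ - v 0 with hb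
  have hli : LinearIndependent ℝ b := by
    rw [Fintype.linearIndependent_iff]
    intro c hc i
    set d : Fin (k + 1) → ℝ := Fin.cons (-(∑ j, c j)) c with hd
    have hdsum : ∑ j, d j = 0 := by
      rw [Fin.sum_univ_succ]
      simp [hd]
    have hdv : ∑ j, d j • v j = 0 := by
      rw [Fin.sum_univ_succ]
      simp only [hd, Fin.cons_zero, Fin.cons_succ]
      have : ∑ j, c j • v j.succ - (∑ j, c j) • v 0 = 0 := by
        rw [Finset.sum_smul, ← Finset.sum_sub_distrib]
        rw [← hc]
        refine Finset.sum_congr rfl fun j _ => ?_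
        rw [smul_sub]
      rw [neg_smul]
      linear_combination (norm := abel) this
    have := aux_coeffs_zero v hneg' d hdsum hdv i.succ
    simpa [hd] using this
  have hspan : Submodule.span ℝ (Set.range fun p : Fin (k + 1) × Fin (k + 1) => v p.1 - v p.2)
      = Submodule.span ℝ (Set.range b) := by
    apply le_antisymm
    · rw [Submodule.span_le]
      rintro x ⟨⟨i, j⟩, rfl⟩
      have hmem : ∀ i : Fin (k + 1), v i - v 0 ∈ Submodule.span ℝ (Set.range b) := by
        intro i
        induction i using Fin.cases with
        | zero => simp
        | succ i => exact Submodule.subset_span ⟨i, rfl⟩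
      have : v i - v j = (v i - v 0) - (v j - v 0) := by abel
      simp only [this]
      exact Submodule.sub_mem _ (hmem i) (hmem j)
    · rw [Submodule.span_le]
      rintro x ⟨i, rfl⟩
      exact Submodule.subset_span ⟨(i.succ, 0), rfl⟩
  rw [hspan, finrank_span_eq_card hli, Fintype.card_fin]
end

section
/- Let {v₀, …, v_k} be linearly independent vectors in a finite-dimensional real inner product space V with ⟨vᵢ, vⱼ⟩ ≤ 0 for all 0 ≤ i < j ≤ k, and let u ∈ V satisfy ⟨vᵢ, u⟩ ≤ 0 for all 0 ≤ i ≤ k. Let pr(v₀) denote the orthogonal projection of v₀ onto the orthogonal complement of span{vᵢ − vⱼ : 0 ≤ i, j ≤ k}. Then ⟨pr(v₀), vᵢ − u⟩ > 0 for all 0 ≤ i ≤ k. -/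
/-!
Let `K` be the span of the differences `vᵢ - vⱼ` and `p` the projection of `v₀` onto `Kᗮ`.
Since `vᵢ - p ∈ K` and `p ⊥ K`, the number `⟪p, vᵢ⟫ = ‖p‖²` does not depend on `i`, and it is
positive because `v₀ ∉ K` by linear independence. Moreover `p = v₀ - (v₀ - p)` lies in the span
of the `vᵢ`, and a vector in the span of a linearly independent obtuse family which makes
nonnegative inner products with all of its members is a nonnegative combination of them.
Hence `⟪p, u⟫ ≤ 0`, and `⟪p, vᵢ - u⟫ ≥ ‖p‖² > 0`.
-/

open RealInnerProductSpace Submodule Set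

section DifferenceSpan

variable {R M ι : Type*} [Ring R] [AddCommGroup M] [Module R M]

theorem span_range_sub_le_span_range (v : ι → M) :
    span R (range fun p : ι × ι => v p.1 - v p.2) ≤ span R (range v) :=
  span_le.2 <| range_subset_iff.2 fun p =>
    sub_mem (subset_span ⟨p.1, rfl⟩) (subset_span ⟨p.2, rfl⟩)

theorem span_range_sub_le_span_range_sub_right (v : ι → M) (i₀ : ι) :
    span R (range fun p : ι × ι => v p.1 - v p.2) ≤ span R (range fun i => v i - v i₀) := by
  refine span_le.2 <| range_subset_iff.2 fun p => ?_
  rw [← sub_sub_sub_cancel_right (v p.1) (v p.2) (v i₀)]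
  exact sub_mem (subset_span ⟨p.1, rfl⟩) (subset_span ⟨p.2, rfl⟩)

theorem LinearIndependent.notMem_span_range_sub [Nontrivial R] [Fintype ι] {v : ι → M}
    (hli : LinearIndependent R v) (i₀ : ι) :
    v i₀ ∉ span R (range fun p : ι × ι => v p.1 - v p.2) := by
  classical
  intro hmem
  obtain ⟨e, he⟩ := (mem_span_range_iff_exists_fun R).1
    (span_range_sub_le_span_range_sub_right v i₀ hmem)
  have hcoord : ∑ i, e i • v i = ∑ i, (Pi.single i₀ (1 + ∑ j, e j) : ι → R) i • v i := by
    simp only [Pi.single_apply, ite_smul, zero_smul, Finset.sum_ite_eq', Finset.mem_univ, if_true]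
    rw [add_smul, one_smul, Finset.sum_smul]
    nth_rw 1 [← he]
    rw [← Finset.sum_add_distrib]
    simp_rw [smul_sub, sub_add_cancel]
  -- the coordinates of both sides have sums `∑ e` and `1 + ∑ e`
  have hsum := Finset.sum_congr rfl fun i (_ : i ∈ Finset.univ) =>
    Fintype.linearIndependent_iffₛ.1 hli _ _ hcoord i
  rw [Finset.sum_pi_single', if_pos (Finset.mem_univ _)] at hsum
  simp at hsum

end DifferenceSpan

section InnerProduct

variable {V : Type*} [NormedAddCommGroup V] [InnerProductSpace ℝ V]

section ObtuseFamily

variable {ι : Type*} [Fintype ι] {v : ι → V}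

theorem inner_sum_smul_sum_smul_nonpos (hobtuse : Pairwise fun i j => ⟪v i, v j⟫ ≤ 0)
    {a b : ι → ℝ} (ha : ∀ i, 0 ≤ a i) (hb : ∀ i, 0 ≤ b i) (hab : ∀ i, a i * b i = 0) :
    ⟪∑ i, a i • v i, ∑ j, b j • v j⟫ ≤ 0 := by
  simp_rw [sum_inner, inner_sum, real_inner_smul_left, real_inner_smul_right]
  refine Finset.sum_nonpos fun i _ => Finset.sum_nonpos fun j _ => ?_
  obtain rfl | hij := eq_or_ne i j
  · rw [← mul_assoc, hab, zero_mul]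
  · exact mul_nonpos_of_nonneg_of_nonpos (ha i) <|
      mul_nonpos_of_nonneg_of_nonpos (hb j) (hobtuse hij)

theorem Real.posPart_mul_negPart (a : ℝ) : a⁺ * a⁻ = 0 := by
  rcases le_total a 0 with h | h
  · rw [posPart_eq_zero.2 h, zero_mul]
  · rw [negPart_eq_zero.2 h, mul_zero]

theorem LinearIndependent.nonneg_of_inner_sum_smul_nonneg (hli : LinearIndependent ℝ v)
    (hobtuse : Pairwise fun i j => ⟪v i, v j⟫ ≤ 0) {c : ι → ℝ}
    (hc : ∀ j, 0 ≤ ⟪∑ i, c i • v i, v j⟫) (i : ι) : 0 ≤ c i := by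
  set x := ∑ i, c i • v i
  set y := ∑ i, (c i)⁻ • v i
  have hxy : x + y = ∑ i, (c i)⁺ • v i := by
    refine Finset.sum_add_distrib.symm.trans (Finset.sum_congr rfl fun i _ => ?_)
    rw [← add_smul, ← sub_eq_iff_eq_add.1 (posPart_sub_negPart (c i))]
  have hxy_y : ⟪x + y, y⟫ ≤ 0 := hxy ▸ inner_sum_smul_sum_smul_nonpos hobtuse
    (fun _ => posPart_nonneg _) (fun _ => negPart_nonneg _) fun _ => Real.posPart_mul_negPart _
  have hx_y : 0 ≤ ⟪x, y⟫ := by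
    simp only [y, inner_sum, real_inner_smul_right]
    exact Finset.sum_nonneg fun j _ => mul_nonneg (negPart_nonneg _) (hc j)
  have hy : y = 0 := by
    have : ⟪y, y⟫ = ⟪x + y, y⟫ - ⟪x, y⟫ := by rw [inner_add_left]; ring
    exact real_inner_self_nonpos.1 (by linarith)
  exact negPart_eq_zero.1 (Fintype.linearIndependent_iff.1 hli _ hy i)

theorem inner_sum_smul_nonpos {c : ι → ℝ} (hc : ∀ i, 0 ≤ c i) {u : V} (hu : ∀ i, ⟪v i, u⟫ ≤ 0) :
    ⟪∑ i, c i • v i, u⟫ ≤ 0 := by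
  rw [sum_inner]
  refine Finset.sum_nonpos fun i _ => ?_
  rw [real_inner_smul_left]
  exact mul_nonpos_of_nonneg_of_nonpos (hc i) (hu i)

end ObtuseFamily

theorem inner_orthogonalProjectionOnto_orthogonal_eq_norm_sq (K : Submodule ℝ V)
    [K.HasOrthogonalProjection] {x y : V} (h : y - x ∈ K) :
    ⟪(Kᗮ.orthogonalProjectionOnto x : V), y⟫ = ‖(Kᗮ.orthogonalProjectionOnto x : V)‖ ^ 2 := by
  set p := (Kᗮ.orthogonalProjectionOnto x : V)
  have hxp : x - p ∈ K := by
    rw [show p = x - K.starProjection x from K.starProjection_orthogonal_val x, sub_sub_cancel]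
    exact K.starProjection_apply_mem x
  have hyp : y - p ∈ K := by simpa using K.add_mem h hxp
  rw [← real_inner_self_eq_norm_sq, ← sub_eq_zero, ← inner_sub_right]
  exact inner_left_of_mem_orthogonal hyp (coe_mem _)

end InnerProduct

/-- Lemma `boundary`: if `v₀,…,v_k` are linearly independent with pairwise nonpositive
inner products and `u` has nonpositive inner product with each `vᵢ`, then the orthogonal
projection of `v₀` onto the orthogonal complement of the span of the differences `vᵢ − vⱼ`
has strictly positive inner product with each `vᵢ − u`. -/
theorem boundary_projection_pos
    {V : Type*} [NormedAddCommGroup V] [InnerProductSpace ℝ V] [FiniteDimensional ℝ V]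
    {k : ℕ} (v : Fin (k + 1) → V)
    (hli : LinearIndependent ℝ v)
    (hneg : ∀ i j, i < j → ⟪v i, v j⟫ ≤ 0)
    (u : V) (hu : ∀ i, ⟪v i, u⟫ ≤ 0) :
    ∀ i, 0 < ⟪(Submodule.orthogonalProjectionOnto
        ((Submodule.span ℝ
          (Set.range fun p : Fin (k + 1) × Fin (k + 1) => v p.1 - v p.2))ᗮ) (v 0) : V),
      v i - u⟫ := by
  set K := span ℝ (range fun p : Fin (k + 1) × Fin (k + 1) => v p.1 - v p.2)
  set p := (Kᗮ.orthogonalProjectionOnto (v 0) : V)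
  have hpv : ∀ j, ⟪p, v j⟫ = ‖p‖ ^ 2 := fun j =>
    inner_orthogonalProjectionOnto_orthogonal_eq_norm_sq K (subset_span ⟨(j, 0), rfl⟩)
  have hp : p ≠ 0 := by
    rw [Ne, ZeroMemClass.coe_eq_zero, orthogonalProjectionOnto_eq_zero_iff, orthogonal_orthogonal]
    exact hli.notMem_span_range_sub 0
  have hp_span : p ∈ span ℝ (range v) := by
    rw [show p = v 0 - K.starProjection (v 0) from K.starProjection_orthogonal_val (v 0)]
    exact sub_mem (subset_span ⟨0, rfl⟩)
      (span_range_sub_le_span_range v (K.starProjection_apply_mem _))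
  obtain ⟨c, hc⟩ := (mem_span_range_iff_exists_fun ℝ).1 hp_span
  have hobtuse : Pairwise fun i j => ⟪v i, v j⟫ ≤ 0 := fun i j hij =>
    hij.lt_or_gt.elim (hneg i j) fun h => (real_inner_comm (v j) (v i)).trans_le (hneg j i h)
  have hc_nonneg : ∀ i, 0 ≤ c i := hli.nonneg_of_inner_sum_smul_nonneg hobtuse fun j => by
    rw [hc, hpv j]
    positivity
  have hpu : ⟪p, u⟫ ≤ 0 := hc ▸ inner_sum_smul_nonpos hc_nonneg hu
  intro i
  rw [inner_sub_right, hpv i]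
  have := pow_pos (norm_pos_iff.2 hp) 2
  linarith
end

section
/- Let {v₀, …, v_k} be linearly independent vectors in a real inner product space. Then the orthogonal projection of v₀ onto the orthogonal complement of span{v₀ − v₁, …, v₀ − v_k} is nonzero, and its inner product with vᵢ equals ‖pr(v₀)‖² > 0 for every 0 ≤ i ≤ k. -/
/-! If `v₀` lay in the span `S` of the `k` differences `v₀ - vᵢ`, then so would every `vᵢ`,
and `S` would contain the `(k+1)`-dimensional span of the `vᵢ`; hence `pr v₀ ≠ 0`. Since
`pr v₀ ⊥ v₀ - vᵢ`, all the inner products `⟪pr v₀, vᵢ⟫` equal `⟪pr v₀, v₀⟫ = ‖pr v₀‖²`. -/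

open RealInnerProductSpace

open Submodule in
theorem LinearIndependent.head_notMem_span_sub_succ {K V : Type*} [DivisionRing K]
    [AddCommGroup V] [Module K V] {k : ℕ} {v : Fin (k + 1) → V} (hv : LinearIndependent K v) :
    v 0 ∉ span K (Set.range fun i : Fin k => v 0 - v i.succ) := by
  set S := span K (Set.range fun i : Fin k => v 0 - v i.succ)
  intro h0
  have hle : span K (Set.range v) ≤ S := by
    refine span_le.2 <| Set.range_subset_iff.2 <| Fin.cases h0 fun i => ?_
    simpa using sub_mem h0 (subset_span ⟨i, rfl⟩ : v 0 - v i.succ ∈ S)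
  have : Module.Finite K S := FiniteDimensional.span_of_finite K (Set.finite_range _)
  have hrank := (finrank_mono hle).trans (finrank_range_le_card (R := K) _)
  rw [finrank_span_eq_card hv] at hrank
  simp at hrank

theorem Submodule.inner_starProjection_orthogonal_eq_norm_sq_of_sub_mem
    {V : Type*} [NormedAddCommGroup V] [InnerProductSpace ℝ V] (K : Submodule ℝ V)
    [K.HasOrthogonalProjection] {x y : V} (hxy : x - y ∈ K) :
    ⟪Kᗮ.starProjection x, y⟫ = ‖Kᗮ.starProjection x‖ ^ 2 := by
  have hperp : ⟪Kᗮ.starProjection x, x - y⟫ = 0 :=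
    inner_left_of_mem_orthogonal hxy (Kᗮ.starProjection_apply_mem x)
  have hx : ⟪Kᗮ.starProjection x, x⟫ = ‖Kᗮ.starProjection x‖ ^ 2 := by
    simpa using Kᗮ.re_inner_starProjection_eq_normSq x
  rw [inner_sub_right, hx] at hperp
  linarith

/-- If `v₀,…,v_k` are linearly independent, then the orthogonal projection of `v₀` onto the
orthogonal complement of the span of `v₀ − v₁, …, v₀ − v_k` is nonzero, and its inner
product with each `vᵢ` equals `‖pr(v₀)‖² > 0`. -/
theorem projection_inner_eq_normSq
    {V : Type*} [NormedAddCommGroup V] [InnerProductSpace ℝ V] [FiniteDimensional ℝ V]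
    {k : ℕ} (v : Fin (k + 1) → V)
    (hli : LinearIndependent ℝ v) :
    (Submodule.orthogonalProjection
        ((Submodule.span ℝ (Set.range fun i : Fin k => v 0 - v i.succ))ᗮ) (v 0) : V) ≠ 0 ∧
    0 < ‖(Submodule.orthogonalProjection
        ((Submodule.span ℝ (Set.range fun i : Fin k => v 0 - v i.succ))ᗮ) (v 0) : V)‖ ^ 2 ∧
    ∀ i, ⟪(Submodule.orthogonalProjection
        ((Submodule.span ℝ (Set.range fun i : Fin k => v 0 - v i.succ))ᗮ) (v 0) : V), v i⟫ =
      ‖(Submodule.orthogonalProjection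
        ((Submodule.span ℝ (Set.range fun i : Fin k => v 0 - v i.succ))ᗮ) (v 0) : V)‖ ^ 2 := by
  set S := Submodule.span ℝ (Set.range fun i : Fin k => v 0 - v i.succ)
  simp only [← Submodule.starProjection_apply]
  have hne : Sᗮ.starProjection (v 0) ≠ 0 := by
    rw [Ne, Submodule.starProjection_apply_eq_zero_iff, S.orthogonal_orthogonal]
    exact hli.head_notMem_span_sub_succ
  refine ⟨hne, by positivity, fun i => S.inner_starProjection_orthogonal_eq_norm_sq_of_sub_mem ?_⟩
  cases i using Fin.cases with
  | zero => simp
  | succ j => exact Submodule.subset_span ⟨j, rfl⟩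
end

section
/- Let M be a Riemannian manifold and f₀, …, f_k smooth real-valued functions on M. Then the set S = {p ∈ M : f₀(p) = f₁(p) = ⋯ = f_k(p)} ∩ {p ∈ M : ⟨∇fᵢ(p), ∇fⱼ(p)⟩ < 0 for all 0 ≤ i < j ≤ k} is either empty or a smooth submanifold of M of codimension k. -/
open RealInnerProductSpace

section aux

variable {E : Type*} [NormedAddCommGroup E] [InnerProductSpace ℝ E]

/-- If vectors have pairwise negative inner products, any linear relation whose
coefficients sum to zero is trivial. -/
lemma key_zero {n : ℕ} (v : Fin (n + 1) → E)
    (hneg : ∀ i j, i ≠ j → ⟪v i, v j⟫ < 0)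
    (d : Fin (n + 1) → ℝ) (hsum : ∑ i, d i = 0)
    (hzero : ∑ i, d i • v i = 0) : ∀ i, d i = 0 := by
  classical
  set P : Finset (Fin (n + 1)) := Finset.univ.filter (fun i => 0 < d i) with hP
  set N : Finset (Fin (n + 1)) := Finset.univ.filter (fun i => d i < 0) with hN
  set w : E := ∑ i ∈ P, d i • v i with hw
  have hPN : ∀ i ∈ P, ∀ j ∈ N, i ≠ j := by
    intro i hi j hj h
    subst h
    simp [hP, hN] at hi hj
    linarith
  -- w is also the sum over N of the negated terms
  have hw2 : w = ∑ j ∈ N, (-(d j)) • v j := by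
    have hsplit : ∑ i ∈ P, d i • v i + ∑ i ∈ Finset.univ.filter (fun i => ¬ 0 < d i),
        d i • v i = 0 := by
      rw [Finset.sum_filter_add_sum_filter_not]; exact hzero
    have hrest : ∑ i ∈ Finset.univ.filter (fun i => ¬ 0 < d i), d i • v i
        = ∑ j ∈ N, d j • v j := by
      refine (Finset.sum_subset ?_ ?_).symm
      · intro j hj
        simp only [hN, Finset.mem_filter, Finset.mem_univ, true_and] at hj
        simp only [Finset.mem_filter, Finset.mem_univ, true_and]
        linarith
      · intro i hi hni
        simp only [Finset.mem_filter, Finset.mem_univ, true_and, not_lt] at hi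
        simp only [hN, Finset.mem_filter, Finset.mem_univ, true_and, not_lt] at hni
        have : d i = 0 := le_antisymm hi hni
        simp [this]
    rw [hrest] at hsplit
    have : w = -∑ j ∈ N, d j • v j := eq_neg_of_add_eq_zero_left hsplit
    rw [this, ← Finset.sum_neg_distrib]
    exact Finset.sum_congr rfl fun j _ => (neg_smul _ _).symm
  -- the inner product ⟪w, w⟫ is nonpositive
  have hww : ⟪w, w⟫ ≤ 0 := by
    calc ⟪w, w⟫ = ⟪∑ i ∈ P, d i • v i, ∑ j ∈ N, (-(d j)) • v j⟫ := by
          rw [← hw, ← hw2]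
      _ = ∑ i ∈ P, ∑ j ∈ N, d i * (-(d j) * ⟪v i, v j⟫) := by
          rw [sum_inner]
          refine Finset.sum_congr rfl fun i _ => ?_
          rw [inner_sum]
          exact Finset.sum_congr rfl fun j _ => by
            rw [real_inner_smul_left, real_inner_smul_right]
      _ ≤ 0 := by
          refine Finset.sum_nonpos fun i hi => Finset.sum_nonpos fun j hj => ?_
          have hij := hPN i hi j hj
          have h1 : 0 < d i := by simpa [hP] using hi
          have h2 : d j < 0 := by simpa [hN] using hj
          have h3 := hneg i j hij
          exact le_of_lt (mul_neg_of_pos_of_neg h1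
            (mul_neg_of_pos_of_neg (neg_pos.2 h2) h3))
  have hw0 : w = 0 := by
    have := real_inner_self_nonneg (x := w)
    have : ⟪w, w⟫ = 0 := le_antisymm hww this
    exact inner_self_eq_zero.mp this
  -- P is empty
  have hPempty : P = ∅ := by
    by_contra hne
    obtain ⟨i0, hi0⟩ := Finset.nonempty_of_ne_empty hne
    -- N is nonempty
    have hNne : N.Nonempty := by
      by_contra hNe
      rw [Finset.not_nonempty_iff_eq_empty] at hNe
      have hnonneg : ∀ i ∈ Finset.univ, (0:ℝ) ≤ d i := by
        intro i _
        by_contra h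
        have : i ∈ N := by simp [hN]; linarith
        simp [hNe] at this
      have hpos : 0 < ∑ i, d i := by
        refine Finset.sum_pos' hnonneg ⟨i0, Finset.mem_univ _, ?_⟩
        simpa [hP] using hi0
      linarith
    obtain ⟨j0, hj0⟩ := hNne
    have h1 : ⟪w, v j0⟫ = ∑ i ∈ P, d i * ⟪v i, v j0⟫ := by
      rw [hw, sum_inner]
      exact Finset.sum_congr rfl fun i _ => real_inner_smul_left _ _ _
    have h2 : ∑ i ∈ P, d i * ⟪v i, v j0⟫ < 0 := by
      refine Finset.sum_neg (fun i hi => ?_) ⟨i0, hi0⟩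
      have hdi : 0 < d i := by simpa [hP] using hi
      have hij := hPN i hi j0 hj0
      have := hneg i j0 hij
      nlinarith
    rw [hw0] at h1
    simp at h1
    linarith
  -- hence all d i ≤ 0, and together with sum = 0 all are zero
  intro i
  have hle : ∀ j, d j ≤ 0 := by
    intro j
    by_contra h
    have : j ∈ P := by simp [hP]; linarith
    simp [hPempty] at this
  by_contra h
  have hdi : d i < 0 := lt_of_le_of_ne (hle i) h
  have : 0 < ∑ j, -(d j) := by
    refine Finset.sum_pos' (fun j _ => by linarith [hle j]) ⟨i, Finset.mem_univ _, by linarith⟩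
  rw [Finset.sum_neg_distrib] at this
  linarith

/-- Linear independence of the differences. -/
lemma diff_indep {n : ℕ} (v : Fin (n + 1) → E)
    (hneg : ∀ i j, i ≠ j → ⟪v i, v j⟫ < 0)
    (c : Fin n → ℝ) (hc : ∑ i, c i • (v i.succ - v 0) = 0) : c = 0 := by
  classical
  set d : Fin (n + 1) → ℝ := Fin.cases (-(∑ i, c i)) c with hd
  have hsum : ∑ i, d i = 0 := by
    rw [Fin.sum_univ_succ]
    simp [hd]
  have hzero : ∑ i, d i • v i = 0 := by
    rw [Fin.sum_univ_succ]
    have : ∑ i : Fin n, d i.succ • v i.succ = ∑ i : Fin n, c i • v i.succ := by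
      refine Finset.sum_congr rfl fun i _ => ?_
      simp [hd]
    rw [this]
    have := hc
    simp only [smul_sub] at this
    rw [Finset.sum_sub_distrib] at this
    have h2 : ∑ i : Fin n, c i • v 0 = (∑ i, c i) • v 0 := by
      rw [Finset.sum_smul]
    rw [h2] at this
    simp only [hd, Fin.cases_zero, neg_smul]
    linear_combination (norm := module) this
  have := key_zero v hneg d hsum hzero
  funext i
  have h := this i.succ
  simpa [hd] using h

/-- Surjectivity from linear independence, via the Gram map. -/
lemma surj_of_indep {n : ℕ} [FiniteDimensional ℝ E] (g : Fin n → E)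
    (hind : ∀ c : Fin n → ℝ, ∑ i, c i • g i = 0 → c = 0)
    (y : Fin n → ℝ) : ∃ v : E, ∀ i, ⟪g i, v⟫ = y i := by
  classical
  set T : (Fin n → ℝ) →ₗ[ℝ] (Fin n → ℝ) :=
    { toFun := fun c i => ⟪g i, ∑ j, c j • g j⟫
      map_add' := by
        intro a b
        funext i
        simp [add_smul, Finset.sum_add_distrib, inner_add_right]
      map_smul' := by
        intro m a
        funext i
        have h : ∑ x, (m * a x) • g x = m • ∑ j, a j • g j := by
          rw [Finset.smul_sum]; simp [smul_smul]
        simp only [RingHom.id_apply, Pi.smul_apply, smul_eq_mul]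
        rw [h, real_inner_smul_right] } with hT
  have hinj : Function.Injective T := by
    rw [← LinearMap.ker_eq_bot, LinearMap.ker_eq_bot']
    intro c hc
    have hci : ∀ i, ⟪g i, ∑ j, c j • g j⟫ = 0 := fun i => congrFun hc i
    have hs : ⟪∑ i, c i • g i, ∑ j, c j • g j⟫ = 0 := by
      rw [sum_inner]
      refine Finset.sum_eq_zero fun i _ => ?_
      rw [real_inner_smul_left, hci i, mul_zero]
    have := inner_self_eq_zero.mp hs
    exact hind c this
  have hsurj : Function.Surjective T := (LinearMap.injective_iff_surjective).mp hinj
  obtain ⟨c, hcy⟩ := hsurj y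
  exact ⟨∑ j, c j • g j, fun i => congrFun hcy i⟩

end aux

/-- `S` is a smooth embedded submanifold of codimension `k` of the vector space `E`:
near each of its points, `S` is the zero locus of a smooth map to `ℝᵏ` whose derivative
is surjective. -/
def IsSmoothSubmanifoldOfCodim {E : Type*} [NormedAddCommGroup E] [NormedSpace ℝ E]
    (k : ℕ) (S : Set E) : Prop :=
  ∀ p ∈ S, ∃ F : E → EuclideanSpace ℝ (Fin k),
    ContDiffAt ℝ (⊤ : ℕ∞) F p ∧ Function.Surjective (fderiv ℝ F p) ∧
    ∀ᶠ x in nhds p, (x ∈ S ↔ F x = 0)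

/-- The set where `k+1` smooth functions agree and where their gradients have pairwise
strictly negative inner products. -/
def gradientEqualitySet {E : Type*} [NormedAddCommGroup E] [InnerProductSpace ℝ E]
    [CompleteSpace E] {k : ℕ} (f : Fin (k + 1) → E → ℝ) : Set E :=
  {p | (∀ i j, f i p = f j p) ∧
    ∀ i j, i < j → ⟪gradient (f i) p, gradient (f j) p⟫ < 0}

/-- Lemma `generalsmooth`: given smooth functions `f₀,…,f_k` on `E`, the set where they
all agree and where their gradients have pairwise negative inner products is either empty
or a smooth submanifold of codimension `k`. -/
theorem equality_locus_smooth_submanifold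
    {E : Type*} [NormedAddCommGroup E] [InnerProductSpace ℝ E] [FiniteDimensional ℝ E]
    {k : ℕ} (f : Fin (k + 1) → E → ℝ) (hf : ∀ i, ContDiff ℝ (⊤ : ℕ∞) (f i)) :
    gradientEqualitySet f = ∅ ∨
      IsSmoothSubmanifoldOfCodim k (gradientEqualitySet f) := by
  right
  intro p hp
  obtain ⟨heq, hneg⟩ := hp
  have hdiff : ∀ i, Differentiable ℝ (f i) := fun i => (hf i).differentiable (by simp)
  -- the map F
  set e : EuclideanSpace ℝ (Fin k) ≃L[ℝ] (Fin k → ℝ) := EuclideanSpace.equiv (Fin k) ℝ with he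
  set G : E → (Fin k → ℝ) := fun x i => f i.succ x - f 0 x with hG
  refine ⟨fun x => e.symm (G x), ?_, ?_, ?_⟩
  · -- smoothness
    exact (e.symm.contDiff.comp (contDiff_pi.2 fun i => (hf i.succ).sub (hf 0))).contDiffAt
  · -- surjectivity of the derivative
    set L : E →L[ℝ] (Fin k → ℝ) :=
      ContinuousLinearMap.pi (fun i => fderiv ℝ (f i.succ) p - fderiv ℝ (f 0) p) with hL
    have hGF : HasFDerivAt G L p := by
      apply hasFDerivAt_pi.2
      intro i
      exact ((hdiff i.succ p).hasFDerivAt).sub ((hdiff 0 p).hasFDerivAt)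
    have hfd : fderiv ℝ (fun x => e.symm (G x)) p =
        (e.symm : (Fin k → ℝ) →L[ℝ] EuclideanSpace ℝ (Fin k)).comp L := by
      rw [show (fun x => e.symm (G x)) = (⇑e.symm) ∘ G from rfl,
        ContinuousLinearEquiv.comp_fderiv, hGF.fderiv]
    rw [hfd]
    refine (Function.Surjective.comp e.symm.surjective ?_ : _)
    -- surjectivity of L using the gradient vectors
    set v : Fin (k + 1) → E := fun i => gradient (f i) p with hv
    have hneg' : ∀ i j, i ≠ j → ⟪v i, v j⟫ < 0 := by
      intro i j hij
      rcases lt_or_gt_of_ne hij with h | h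
      · exact hneg i j h
      · rw [real_inner_comm]; exact hneg j i h
    set g : Fin k → E := fun i => v i.succ - v 0 with hg
    have hindep : ∀ c : Fin k → ℝ, ∑ i, c i • g i = 0 → c = 0 :=
      fun c hc => diff_indep v hneg' c hc
    have hgrad : ∀ (i : Fin (k+1)) (w : E), ⟪v i, w⟫ = fderiv ℝ (f i) p w := by
      intro i w
      rw [hv]
      exact InnerProductSpace.toDual_symm_apply
    intro y
    obtain ⟨w, hw⟩ := surj_of_indep g hindep y
    refine ⟨w, ?_⟩
    funext i
    have := hw i
    rw [hg, inner_sub_left, hgrad, hgrad] at this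
    simpa [hL] using this
  · -- local characterization
    have hcont : ∀ i j, ContinuousAt (fun x => ⟪gradient (f i) x, gradient (f j) x⟫) p := by
      intro i j
      have h1 : ∀ m : Fin (k+1), Continuous (fun x => gradient (f m) x) := by
        intro m
        have : Continuous (fun x => fderiv ℝ (f m) x) := ((hf m).continuous_fderiv (by simp))
        exact (InnerProductSpace.toDual ℝ E).symm.continuous.comp this
      exact ((h1 i).inner (h1 j)).continuousAt
    have hev : ∀ᶠ x in nhds p, ∀ i j, i < j →
        ⟪gradient (f i) x, gradient (f j) x⟫ < 0 := by
      rw [Filter.eventually_all]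
      intro i
      rw [Filter.eventually_all]
      intro j
      by_cases hij : i < j
      · have := (hcont i j).eventually_lt continuousAt_const (hneg i j hij)
        exact this.mono fun x hx _ => hx
      · exact Filter.Eventually.of_forall fun x h => absurd h hij
    filter_upwards [hev] with x hx
    constructor
    · rintro ⟨hxeq, -⟩
      ext i
      show f i.succ x - f 0 x = 0
      rw [sub_eq_zero]
      exact hxeq i.succ 0
    · intro hFx
      have hx0 : ∀ i : Fin (k+1), f i x = f 0 x := by
        intro i
        induction i using Fin.cases with
        | zero => rfl
        | succ m =>
          have := congrFun (congrArg (fun (z : EuclideanSpace ℝ (Fin k)) => e z) hFx) m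
          have h' : f m.succ x - f 0 x = 0 := by simpa [he, hG] using this
          linarith [h']
      exact ⟨fun i j => by rw [hx0 i, hx0 j], hx⟩
end

section
/- Let V be a finite-dimensional real inner product space and W a subspace spanned by linearly independent vectors v₀,…,v_k with ⟨vᵢ, vⱼ⟩ ≤ 0 for i < j. If u ∈ V satisfies ⟨vᵢ, u⟩ ≤ 0 for all i, then u can be written as u = ε − u_C, where ε is orthogonal to W and u_C lies in the cone of nonnegative linear combinations of v₀, …, v_k (the dominant cone with respect to the dual basis in W). -/
/-!
Project `u` orthogonally onto `W = span{v₀,…,v_k}` and put `ε := u - proj u`, `u_C := -proj u`.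
Then `⟪vᵢ, u_C⟫ = -⟪vᵢ, u⟫ ≥ 0`, so `u_C` lies in the dominant cone, and Langlands' lemma places
it in the cone spanned by the `vᵢ`. For Langlands' lemma write `w = ∑ cᵢ vᵢ = w⁺ - w⁻` with
`w^± = ∑ cᵢ^± vᵢ`: since the `vᵢ` are pairwise obtuse and `c⁺, c⁻` have disjoint supports,
`⟪w⁻, w⁺⟫ ≤ 0`, while `⟪w⁻, w⟫ ≥ 0`; hence `‖w⁻‖² ≤ 0`, and linear independence forces `c⁻ = 0`.
-/

open RealInnerProductSpace Finset

section ObtuseFamily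

variable {V ι : Type*} [NormedAddCommGroup V] [InnerProductSpace ℝ V] [Fintype ι] {v : ι → V}

lemma inner_sum_smul_nonpos_of_pairwise_inner_nonpos_s9 (hv : Pairwise fun i j ↦ ⟪v i, v j⟫ ≤ 0)
    {a b : ι → ℝ} (ha : 0 ≤ a) (hb : 0 ≤ b) (hab : ∀ i, a i * b i = 0) :
    ⟪∑ i, a i • v i, ∑ j, b j • v j⟫ ≤ 0 := by
  rw [sum_inner]
  refine sum_nonpos fun i _ ↦ ?_
  rw [inner_sum]
  refine sum_nonpos fun j _ ↦ ?_
  rw [real_inner_smul_left, real_inner_smul_right]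
  rcases eq_or_ne i j with rfl | hij
  · rw [← mul_assoc, hab, zero_mul]
  · exact mul_nonpos_of_nonneg_of_nonpos (ha i) (mul_nonpos_of_nonneg_of_nonpos (hb j) (hv hij))

lemma sum_negPart_smul_eq_zero_of_inner_nonneg (hv : Pairwise fun i j ↦ ⟪v i, v j⟫ ≤ 0)
    {c : ι → ℝ} (hc : ∀ i, 0 ≤ ⟪v i, ∑ j, c j • v j⟫) :
    ∑ i, (c i)⁻ • v i = 0 := by
  set wp := ∑ i, (c i)⁺ • v i
  set wm := ∑ i, (c i)⁻ • v i
  have hsplit : ∑ j, c j • v j = wp - wm := by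
    simp only [wp, wm, ← sum_sub_distrib, ← sub_smul, posPart_sub_negPart]
  have hdisjoint (i : ι) : (c i)⁻ * (c i)⁺ = 0 := by
    rcases le_total (c i) 0 with h | h
    · rw [posPart_eq_zero.mpr h, mul_zero]
    · rw [negPart_eq_zero.mpr h, zero_mul]
  have hcross : ⟪wm, wp⟫ ≤ 0 := inner_sum_smul_nonpos_of_pairwise_inner_nonpos_s9 hv
    (fun i ↦ negPart_nonneg _) (fun i ↦ posPart_nonneg _) hdisjoint
  have hw : 0 ≤ ⟪wm, wp - wm⟫ := by
    rw [← hsplit, sum_inner]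
    exact sum_nonneg fun i _ ↦ by
      rw [real_inner_smul_left]
      exact mul_nonneg (negPart_nonneg _) (hc i)
  rw [inner_sub_right] at hw
  exact real_inner_self_nonpos.mp (by linarith)

/-- Langlands' lemma: for a linearly independent, pairwise obtuse family, the dominant cone in
its span is contained in the cone it generates. -/
theorem LinearIndependent.exists_nonneg_coeffs_of_inner_nonneg (hli : LinearIndependent ℝ v)
    (hv : Pairwise fun i j ↦ ⟪v i, v j⟫ ≤ 0) {w : V} (hw : w ∈ Submodule.span ℝ (Set.range v))
    (hdom : ∀ i, 0 ≤ ⟪v i, w⟫) :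
    ∃ c : ι → ℝ, (∀ i, 0 ≤ c i) ∧ w = ∑ i, c i • v i := by
  obtain ⟨c, rfl⟩ := (Submodule.mem_span_range_iff_exists_fun ℝ).mp hw
  refine ⟨c, fun i ↦ negPart_eq_zero.mp ?_, rfl⟩
  exact Fintype.linearIndependent_iff.mp hli _ (sum_negPart_smul_eq_zero_of_inner_nonneg hv hdom) i

end ObtuseFamily

theorem decompose_nonpositive_vector_general
    {V : Type*} [NormedAddCommGroup V] [InnerProductSpace ℝ V]
    {k : ℕ} (v : Fin (k + 1) → V)
    (hli : LinearIndependent ℝ v)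
    (hneg : ∀ i j, i < j → ⟪v i, v j⟫ ≤ 0)
    (u : V) (hu : ∀ i, ⟪v i, u⟫ ≤ 0) :
    ∃ (ε uC : V) (c : Fin (k + 1) → ℝ),
      u = ε - uC ∧ ε ∈ (Submodule.span ℝ (Set.range v))ᗮ ∧
      (∀ i, 0 ≤ c i) ∧ uC = ∑ i, c i • v i := by
  set W := Submodule.span ℝ (Set.range v)
  have : FiniteDimensional ℝ W := FiniteDimensional.span_of_finite ℝ (Set.finite_range v)
  have hv : Pairwise fun i j ↦ ⟪v i, v j⟫ ≤ 0 := fun i j hij ↦ by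
    rcases hij.lt_or_gt with h | h
    · exact hneg i j h
    · exact real_inner_comm (v i) (v j) ▸ hneg j i h
  have hε : u - W.starProjection u ∈ Wᗮ := W.sub_starProjection_mem_orthogonal u
  have hdom (i : Fin (k + 1)) : 0 ≤ ⟪v i, -W.starProjection u⟫ := by
    have h := (Submodule.mem_orthogonal W _).mp hε (v i) (Submodule.subset_span ⟨i, rfl⟩)
    rw [inner_sub_right] at h
    rw [inner_neg_right]
    linarith [hu i]
  obtain ⟨c, hc, hcv⟩ :=
    hli.exists_nonneg_coeffs_of_inner_nonneg hv (W.neg_mem (W.starProjection_apply_mem u)) hdom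
  exact ⟨u - W.starProjection u, -W.starProjection u, c, by abel, hε, hc, hcv⟩

/-- If `v₀,…,v_k` are linearly independent with pairwise nonpositive inner products and
`u` has nonpositive inner product with each `vᵢ`, then `u = ε − u_C` where `ε` is
orthogonal to `W = span{v₀,…,v_k}` and `u_C` is a nonnegative linear combination of the
`vᵢ`. -/
theorem decompose_nonpositive_vector
    {V : Type*} [NormedAddCommGroup V] [InnerProductSpace ℝ V] [FiniteDimensional ℝ V]
    {k : ℕ} (v : Fin (k + 1) → V)
    (hli : LinearIndependent ℝ v)
    (hneg : ∀ i j, i < j → ⟪v i, v j⟫ ≤ 0)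
    (u : V) (hu : ∀ i, ⟪v i, u⟫ ≤ 0) :
    ∃ (ε uC : V) (c : Fin (k + 1) → ℝ),
      u = ε - uC ∧ ε ∈ (Submodule.span ℝ (Set.range v))ᗮ ∧
      (∀ i, 0 ≤ c i) ∧ uC = ∑ i, c i • v i :=
  decompose_nonpositive_vector_general v hli hneg u hu
end

section
/- Let f_P, f_Q : D → ℝ_{>0} be smooth functions on a Riemannian manifold D satisfying f_P(z)‖∇f_Q(z)‖ = f_Q(z)‖∇f_P(z)‖ for all z ∈ D, and let E = {z ∈ D : f_P(z) = f_Q(z)}. Then at any point z ∈ E, ‖∇f_P(z)‖ = ‖∇f_Q(z)‖, and the gradient of the restriction of f_P to E (assuming E is a smooth submanifold near z) equals ½(∇f_P(z) + ∇f_Q(z)); in particular z is a critical point of f_P|_E if and only if ∇f_P(z) = −∇f_Q(z). -/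
open RealInnerProductSpace

/-- On the equality locus `E = {f_P = f_Q}` of two smooth positive functions satisfying
`f_P ‖∇f_Q‖ = f_Q ‖∇f_P‖`, the gradient norms agree, the tangential part of `∇f_P`
(the orthogonal projection onto the hyperplane orthogonal to `∇f_P − ∇f_Q`, i.e. the
gradient of the restriction `f_P|_E`) equals `½(∇f_P + ∇f_Q)`, and it vanishes (i.e. `z`
is a critical point of `f_P|_E`) if and only if `∇f_P(z) = −∇f_Q(z)`. -/
theorem restricted_gradient_on_equality_locus
    {D : Type*} [NormedAddCommGroup D] [InnerProductSpace ℝ D] [FiniteDimensional ℝ D]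
    (fP fQ : D → ℝ) (hP : ContDiff ℝ (⊤ : ℕ∞) fP) (hQ : ContDiff ℝ (⊤ : ℕ∞) fQ)
    (hpos : ∀ z, 0 < fP z ∧ 0 < fQ z)
    (hrel : ∀ z, fP z * ‖gradient fQ z‖ = fQ z * ‖gradient fP z‖)
    (z : D) (hz : fP z = fQ z) :
    ‖gradient fP z‖ = ‖gradient fQ z‖ ∧
    (Submodule.orthogonalProjectionOnto ((ℝ ∙ (gradient fP z - gradient fQ z))ᗮ) (gradient fP z) : D) =
      (1 / 2 : ℝ) • (gradient fP z + gradient fQ z) ∧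
    ((Submodule.orthogonalProjectionOnto ((ℝ ∙ (gradient fP z - gradient fQ z))ᗮ) (gradient fP z) : D) = 0 ↔
      gradient fP z = -gradient fQ z) := by
  set u := gradient fP z
  set v := gradient fQ z
  have hnorm : ‖u‖ = ‖v‖ := by
    have h := hrel z
    rw [hz] at h
    exact (mul_left_cancel₀ (hpos z).2.ne' h).symm
  have hproj : (Submodule.orthogonalProjectionOnto ((ℝ ∙ (u - v))ᗮ) u : D) = (1 / 2 : ℝ) • (u + v) := by
    rw [Submodule.coe_orthogonalProjectionOnto_apply, Submodule.starProjection_orthogonal_val,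
      Submodule.starProjection_singleton]
    by_cases hw : u - v = 0
    · have huv : u = v := sub_eq_zero.mp hw
      rw [hw]
      simp [huv, smul_add]
      module
    · have h2 : ⟪u - v, u⟫ / ((‖u - v‖ : ℝ) ^ 2) = 1 / 2 := by
        have hn : ‖u - v‖ ^ 2 = 2 * ⟪u - v, u⟫ := by
          rw [← real_inner_self_eq_norm_sq]
          simp only [inner_sub_left, inner_sub_right, real_inner_comm v u]
          have : ⟪u, u⟫ = ⟪v, v⟫ := by
            rw [real_inner_self_eq_norm_sq, real_inner_self_eq_norm_sq, hnorm]
          rw [this]; ring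
        have hne : ‖u - v‖ ^ 2 ≠ 0 := by
          have : (0:ℝ) < ‖u - v‖ ^ 2 := by
            have := norm_pos_iff.mpr hw; positivity
          exact this.ne'
        rw [hn]
        have h0 : (2:ℝ) * ⟪u - v, u⟫ ≠ 0 := hn ▸ hne
        field_simp; exact mul_inv_cancel₀ (right_ne_zero_of_mul h0)
      simp only [RCLike.ofReal_real_eq_id, id_eq]
      rw [h2]
      have : (1/2 : ℝ) • (u - v) = u - (1/2 : ℝ) • (u + v) := by module
      rw [this]; abel
  refine ⟨hnorm, hproj, ?_⟩
  rw [hproj]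
  constructor
  · intro h
    have huv : u + v = 0 := by
      rcases smul_eq_zero.mp h with h' | h'
      · norm_num at h'
      · exact h'
    exact eq_neg_of_add_eq_zero_left huv
  · intro h; rw [h]; simp
end

section
/- Let N ≥ 1 be an integer, c₀, …, c_N ≥ 0 real constants with c_N > 0, and a, b > 0 constants. Define g : ℝ_{>0} → ℝ_{>0} by g(y) = a·y·(Σ_{k=0}^{N} c_k b^{−2k} y^{2k})^{−1/N}. Then on the set where g(y) = y (i.e. Σ c_k b^{−2k} y^{2k} = a^N), if moreover g'(y) = −1 at such a point, then c_k = 0 for all k = 0, …, N−1. -/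
/-!
Write `S(t) = Σ c_k b^{-2k} t^{2k}`, so `g(t) = a t S(t)^{-1/N}`. Where `S(y) = a^N` the factor
`a S(y)^{-1/N}` is `1`, hence `g'(y) = 1 - y S'(y) / (N S(y))`, and `g'(y) = -1` means
`y S'(y) = 2N S(y)`. Since `y S'(y) = Σ 2k w_k` with the nonnegative weights
`w_k = c_k b^{-2k} y^{2k}` of `S(y) = Σ w_k`, the weighted mean of the exponents `2k ≤ 2N` equals its
largest possible value, so every `w_k` with `k < N` vanishes.
-/

open Finset

theorem hasDerivAt_sum_mul_pow {ι : Type*} (s : Finset ι) (d : ι → ℝ) (n : ι → ℕ) {t : ℝ} (ht : t ≠ 0) :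
    HasDerivAt (fun x => ∑ k ∈ s, d k * x ^ n k) ((∑ k ∈ s, n k * (d k * t ^ n k)) / t) t := by
  rw [sum_div]
  refine HasDerivAt.fun_sum fun k _ => ((hasDerivAt_pow (n k) t).const_mul (d k)).congr_deriv ?_
  rcases Nat.eq_zero_or_pos (n k) with hk | hk
  · simp [hk]
  · rw [pow_sub₀ t ht hk, pow_one]
    field_simp

theorem hasDerivAt_mul_self_mul_rpow_neg_inv {N : ℕ} (hN : N ≠ 0) {a : ℝ} (ha : 0 < a)
    {S : ℝ → ℝ} {S' y : ℝ} (hS : HasDerivAt S S' y) (hSy : S y = a ^ N) :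
    HasDerivAt (fun t => a * t * S t ^ (-1 / (N : ℝ))) (1 - y * S' / (N * a ^ N)) y := by
  have haN : 0 < a ^ N := pow_pos ha N
  have hroot : (a ^ N) ^ (-1 / (N : ℝ)) = a⁻¹ := by
    rw [← Real.rpow_natCast, ← Real.rpow_mul ha.le, mul_div_cancel₀ _ (by exact_mod_cast hN),
      Real.rpow_neg_one]
  refine (((hasDerivAt_id y).const_mul a).mul
    (hS.rpow_const (Or.inl (hSy ▸ haN.ne')))).congr_deriv ?_
  rw [id, hSy, Real.rpow_sub haN, Real.rpow_one, hroot]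
  field_simp
  ring

theorem eq_zero_of_sum_mul_eq_mul_sum {ι : Type*} {s : Finset ι} {f w : ι → ℝ} {M : ℝ}
    (hw : ∀ k ∈ s, 0 ≤ w k) (hf : ∀ k ∈ s, f k ≤ M)
    (hmean : ∑ k ∈ s, f k * w k = M * ∑ k ∈ s, w k) :
    ∀ k ∈ s, f k < M → w k = 0 := by
  have hgap : ∑ k ∈ s, (M - f k) * w k = 0 := by
    simp only [sub_mul, sum_sub_distrib, ← mul_sum, hmean, sub_self]
  intro k hk hfk
  have := (sum_eq_zero_iff_of_nonneg fun j hj =>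
    mul_nonneg (sub_nonneg.2 (hf j hj)) (hw j hj)).1 hgap k hk
  exact (mul_eq_zero.1 this).resolve_left (sub_pos.2 hfk).ne'

theorem neggrad_core_general (N : ℕ) (hN : 1 ≤ N)
    (c : ℕ → ℝ) (hc : ∀ k ≤ N, 0 ≤ c k)
    (a b : ℝ) (ha : 0 < a) (hb : 0 < b)
    (g : ℝ → ℝ)
    (hg : ∀ y > (0 : ℝ), g y =
      a * y * (∑ k ∈ range (N + 1), c k * (b ^ (2 * k))⁻¹ * y ^ (2 * k)) ^ (-1 / (N : ℝ)))
    (y : ℝ) (hy : 0 < y)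
    (hsum : ∑ k ∈ range (N + 1), c k * (b ^ (2 * k))⁻¹ * y ^ (2 * k) = a ^ N)
    (hderiv : HasDerivAt g (-1) y) :
    ∀ k < N, c k = 0 := by
  have hS := hasDerivAt_sum_mul_pow (range (N + 1)) (fun k => c k * (b ^ (2 * k))⁻¹)
    (2 * ·) hy.ne'
  have hg' := (hasDerivAt_mul_self_mul_rpow_neg_inv (by omega) ha hS hsum).congr_of_eventuallyEq
    (eventually_gt_nhds hy |>.mono hg)
  have hmean : ∑ k ∈ range (N + 1), ((2 * k : ℕ) : ℝ) * (c k * (b ^ (2 * k))⁻¹ * y ^ (2 * k)) =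
      2 * N * ∑ k ∈ range (N + 1), c k * (b ^ (2 * k))⁻¹ * y ^ (2 * k) := by
    have hslope := hg'.unique hderiv
    rw [mul_div_cancel₀ _ hy.ne'] at hslope
    rw [hsum, mul_assoc, ← div_eq_iff (by positivity)]
    linarith
  intro k hk
  have hwk : c k * (b ^ (2 * k))⁻¹ * y ^ (2 * k) = 0 := eq_zero_of_sum_mul_eq_mul_sum
    (fun j hj => by have := hc j (Nat.lt_succ_iff.1 (mem_range.1 hj)); positivity)
    (fun j hj => by have := mem_range.1 hj; exact_mod_cast (by omega : 2 * j ≤ 2 * N))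
    hmean k (mem_range.2 (by omega)) (by exact_mod_cast (by omega : 2 * k < 2 * N))
  simpa [hb.ne', hy.ne'] using hwk

/-- Computational core of Proposition `neggrad`: for
`g(y) = a·y·(Σ_{k=0}^{N} c_k b^{−2k} y^{2k})^{−1/N}` with `c_k ≥ 0`, `c_N > 0`,
`a, b > 0`, at a point `y > 0` where `g(y) = y` (equivalently
`Σ c_k b^{−2k} y^{2k} = a^N`) and `g'(y) = −1`, all intermediate coefficients
`c_0, …, c_{N−1}` vanish. -/
theorem neggrad_core (N : ℕ) (hN : 1 ≤ N)
    (c : ℕ → ℝ) (hc : ∀ k ≤ N, 0 ≤ c k) (hcN : 0 < c N)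
    (a b : ℝ) (ha : 0 < a) (hb : 0 < b)
    (g : ℝ → ℝ)
    (hg : ∀ y > (0 : ℝ), g y =
      a * y * (∑ k ∈ range (N + 1), c k * (b ^ (2 * k))⁻¹ * y ^ (2 * k)) ^ (-1 / (N : ℝ)))
    (y : ℝ) (hy : 0 < y)
    (hgy : g y = y)
    (hsum : ∑ k ∈ range (N + 1), c k * (b ^ (2 * k))⁻¹ * y ^ (2 * k) = a ^ N)
    (hderiv : HasDerivAt g (-1) y) :
    ∀ k < N, c k = 0 :=
  neggrad_core_general N hN c hc a b ha hb g hg y hy hsum hderiv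
end
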